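/- arXiv:2308.09344 — 2 statements merged into one kernel-verified Lean document; each statement's English description precedes it below -/
import Mathlib

section
/- If a permutation x avoids the pattern 123 and avoids the bivincular pattern 132* (no i < j with x_i < x_{j+1} and x_j = x_{j+1}+1), then x is sorted by the (132,321)-machine. -/
/-- `isoOrd p q` : `q` is order-isomorphic to `p`. -/
def isoOrd (p q : List ℕ) : Bool :=
  (p.length == q.length) &&
    (List.range p.length).all fun i =>
      (List.range p.length).all fun j =>
        decide ((p.getD i 0 < p.getD j 0) ↔ (q.getD i 0 < q.getD j 0))

/-- `containsPat p w` : the word `w` contains an occurrence of the classical pattern `p`. -/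
def containsPat (p w : List ℕ) : Bool :=
  (w.sublistsLen p.length).any (isoOrd p)

/-- Pop phase of the right-greedy `T`-avoiding stack: with next input `a`,
pop entries from the top of the stack while pushing `a` would create a pattern of `T`
(read from top to bottom).  Returns the remaining stack and the popped entries in output order. -/
def popPhase (T : List (List ℕ)) (a : ℕ) : List ℕ → List ℕ × List ℕ
  | [] => ([], [])
  | b :: s =>
    if T.any (fun p => containsPat p (a :: b :: s)) then
      let r := popPhase T a s
      (r.1, b :: r.2)
    else (b :: s, [])

/-- Main loop of the right-greedy `T`-avoiding stack map. -/
def stkAux (T : List (List ℕ)) : List ℕ → List ℕ → List ℕ → List ℕ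
  | [], stack, out => out ++ stack
  | a :: rest, stack, out =>
    let r := popPhase T a stack
    stkAux T rest (a :: r.1) (out ++ r.2)

/-- The generalized stack-sorting map `s_T` : the input is pushed right-greedily through a
stack which must avoid (read from top to bottom) every pattern in `T`. -/
def sT (T : List (List ℕ)) (x : List ℕ) : List ℕ := stkAux T x [] []

/-- West's stack-sorting map: the stack must be increasing from top to bottom,
i.e. must avoid `21` read from top to bottom. -/
def westSort (x : List ℕ) : List ℕ := sT [[2,1]] x

/-- `x` is a permutation of `{1,…,n}`, written as a list. -/
def IsPermList (n : ℕ) (x : List ℕ) : Prop := x.Perm (List.range' 1 n)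

/-- The identity permutation `1 2 … n`. -/
def idPerm (n : ℕ) : List ℕ := List.range' 1 n

/-- `x` contains the bivincular pattern `132*` : positions `i < j` (0-based) with
`x i < x (j+1)` and `x j = x (j+1) + 1`. -/
def Has132Star (x : List ℕ) : Prop :=
  ∃ i j, i < j ∧ j + 1 < x.length ∧ x.getD i 0 < x.getD (j+1) 0 ∧
    x.getD j 0 = x.getD (j+1) 0 + 1

/-- `x` contains the bivincular pattern `123*` : positions `i < j` (0-based) with
`x i < x j` and `x (j+1) = x j + 1`. -/
def Has123Star (x : List ℕ) : Prop :=
  ∃ i j, i < j ∧ j + 1 < x.length ∧ x.getD i 0 < x.getD j 0 ∧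
    x.getD (j+1) 0 = x.getD j 0 + 1

/-- Boolean version of `Has132Star`. -/
def has132star (x : List ℕ) : Bool :=
  (List.range x.length).any fun j =>
    decide (j + 1 < x.length) && (x.getD j 0 == x.getD (j+1) 0 + 1) &&
      (List.range j).any fun i => decide (x.getD i 0 < x.getD (j+1) 0)

/-- Boolean version of `Has123Star`. -/
def has123star (x : List ℕ) : Bool :=
  (List.range x.length).any fun j =>
    decide (j + 1 < x.length) && (x.getD (j+1) 0 == x.getD j 0 + 1) &&
      (List.range j).any fun i => decide (x.getD i 0 < x.getD j 0)

/-!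
Reading a permutation that avoids `123` and `132*`, the `(132,321)`-stack keeps everything below
its top entry increasing from top to bottom, and every entry it outputs is smaller than the entries
output before it and larger than those still unread. So the first pass outputs a decreasing word
followed by an increasing one, and West's stack-sorting map sorts every such word.
-/

open scoped List

lemma List.cons_sublist_append_of_mem {α : Type*} {e : α} {q l r : List α} (he : e ∈ q)
    (hl : l <+ r) : e :: l <+ q ++ r :=
  (List.singleton_sublist.mpr he).append hl

lemma isoOrd_123 (c d e : ℕ) : isoOrd [1, 2, 3] [c, d, e] ↔ c < d ∧ d < e := by
  simp [isoOrd, List.range_succ]; omega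

lemma isoOrd_132 (c d e : ℕ) : isoOrd [1, 3, 2] [c, d, e] ↔ c < e ∧ e < d := by
  simp [isoOrd, List.range_succ]; omega

lemma isoOrd_321 (c d e : ℕ) : isoOrd [3, 2, 1] [c, d, e] ↔ e < d ∧ d < c := by
  simp [isoOrd, List.range_succ]; omega

lemma isoOrd_21 (c d : ℕ) : isoOrd [2, 1] [c, d] ↔ d < c := by
  simp [isoOrd, List.range_succ]; omega

lemma containsPat_iff {p w : List ℕ} :
    containsPat p w ↔ ∃ l, l <+ w ∧ l.length = p.length ∧ isoOrd p l := by
  simp [containsPat, List.mem_sublistsLen, and_assoc]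

lemma containsPat_iff_of_length_eq_two {p w : List ℕ} (hp : p.length = 2) :
    containsPat p w ↔ ∃ c d, [c, d] <+ w ∧ isoOrd p [c, d] := by
  simp only [containsPat_iff, hp, List.length_eq_two]
  constructor
  · rintro ⟨_, hw, ⟨c, d, rfl⟩, hiso⟩
    exact ⟨c, d, hw, hiso⟩
  · rintro ⟨c, d, hw, hiso⟩
    exact ⟨_, hw, ⟨c, d, rfl⟩, hiso⟩

lemma containsPat_iff_of_length_eq_three {p w : List ℕ} (hp : p.length = 3) :
    containsPat p w ↔ ∃ c d e, [c, d, e] <+ w ∧ isoOrd p [c, d, e] := by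
  simp only [containsPat_iff, hp, List.length_eq_three]
  constructor
  · rintro ⟨_, hw, ⟨c, d, e, rfl⟩, hiso⟩
    exact ⟨c, d, e, hw, hiso⟩
  · rintro ⟨c, d, e, hw, hiso⟩
    exact ⟨_, hw, ⟨c, d, e, rfl⟩, hiso⟩

lemma containsPat_123_iff {w : List ℕ} :
    containsPat [1, 2, 3] w ↔ ∃ c d e, [c, d, e] <+ w ∧ c < d ∧ d < e := by
  simp only [containsPat_iff_of_length_eq_three (p := [1, 2, 3]) rfl, isoOrd_123]

lemma containsPat_21_iff {w : List ℕ} :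
    containsPat [2, 1] w ↔ ∃ c d, [c, d] <+ w ∧ d < c := by
  simp only [containsPat_iff_of_length_eq_two (p := [2, 1]) rfl, isoOrd_21]

lemma any_containsPat_132_321_iff {w : List ℕ} :
    ([[1, 3, 2], [3, 2, 1]].any fun p => containsPat p w) ↔
      ∃ c d e, [c, d, e] <+ w ∧ (c < e ∧ e < d ∨ e < d ∧ d < c) := by
  simp only [List.any_cons, List.any_nil, Bool.or_false, Bool.or_eq_true,
    containsPat_iff_of_length_eq_three (p := [1, 3, 2]) rfl,
    containsPat_iff_of_length_eq_three (p := [3, 2, 1]) rfl, isoOrd_132, isoOrd_321]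
  grind

section StackMachine

variable {T : List (List ℕ)}

lemma popPhase_cons_of_any {a b : ℕ} {s : List ℕ}
    (h : T.any fun p => containsPat p (a :: b :: s)) :
    popPhase T a (b :: s) = ((popPhase T a s).1, b :: (popPhase T a s).2) := by
  simp [popPhase, h]

lemma popPhase_cons_of_not_any {a b : ℕ} {s : List ℕ}
    (h : ¬ T.any fun p => containsPat p (a :: b :: s)) :
    popPhase T a (b :: s) = (b :: s, []) := by
  simp [popPhase, h]

lemma popPhase_perm (a : ℕ) (s : List ℕ) :
    (popPhase T a s).2 ++ (popPhase T a s).1 ~ s := by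
  induction s with
  | nil => simp [popPhase]
  | cons b s ih =>
    by_cases h : T.any fun p => containsPat p (a :: b :: s)
    · simpa [popPhase_cons_of_any h] using ih.cons b
    · simp [popPhase_cons_of_not_any h]

lemma stkAux_perm (rest stack out : List ℕ) :
    stkAux T rest stack out ~ out ++ stack ++ rest := by
  induction rest generalizing stack out with
  | nil => simp [stkAux]
  | cons a rest ih =>
    rw [stkAux]
    refine (ih _ _).trans ?_
    rw [List.perm_iff_count]
    intro y
    have h := (popPhase_perm (T := T) a stack).count_eq y
    simp only [List.count_append, List.count_cons] at h ⊢
    omega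

lemma sT_perm (x : List ℕ) : sT T x ~ x := by
  simpa [sT] using stkAux_perm (T := T) x [] []

end StackMachine

lemma not_containsPat_21_of_pairwise_le {w : List ℕ} (hw : w.Pairwise (· ≤ ·)) :
    ¬ containsPat [2, 1] w := by
  rw [containsPat_21_iff]
  rintro ⟨c, d, hsub, hdc⟩
  exact (List.pairwise_pair.mp (hw.sublist hsub)).not_gt hdc

lemma exists_popPhase_21_eq {b : ℕ} {st : List ℕ} (hst : st.Pairwise (· ≤ ·)) :
    ∃ tk dr, popPhase [[2, 1]] b st = (dr, tk) ∧ tk ++ dr = st ∧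
      (∀ t ∈ tk, t < b) ∧ ∀ z ∈ dr, b ≤ z := by
  induction st with
  | nil => exact ⟨[], [], by simp [popPhase], rfl, by simp, by simp⟩
  | cons h t ih =>
    by_cases hhb : h < b
    · obtain ⟨tk, dr, hpop, rfl, htk, hdr⟩ := ih hst.of_cons
      have hfire : [[2, 1]].any fun p => containsPat p (b :: h :: (tk ++ dr)) := by
        simp only [List.any_cons, List.any_nil, Bool.or_false, containsPat_21_iff]
        exact ⟨b, h, by simp, hhb⟩
      refine ⟨h :: tk, dr, ?_, rfl, ?_, hdr⟩
      · rw [popPhase_cons_of_any hfire, hpop]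
      · simpa [hhb] using htk
    · have hbh : b ≤ h := not_lt.mp hhb
      have hb : ∀ z ∈ h :: t, b ≤ z :=
        List.forall_mem_cons.mpr
          ⟨hbh, fun z hz => hbh.trans ((List.pairwise_cons.mp hst).1 z hz)⟩
      have hno := not_containsPat_21_of_pairwise_le (List.pairwise_cons.mpr ⟨hb, hst⟩)
      exact ⟨[], h :: t, popPhase_cons_of_not_any (by simpa using hno), rfl, by simp, hb⟩

lemma stkAux_21_append_of_pairwise_ge {u st : List ℕ} (v out : List ℕ)
    (hu : u.Pairwise (· ≥ ·)) (hst : st.Pairwise (· ≤ ·))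
    (hust : ∀ e ∈ u, ∀ f ∈ st, e ≤ f) :
    stkAux [[2, 1]] (u ++ v) st out = stkAux [[2, 1]] v (u.reverse ++ st) out := by
  induction u generalizing st with
  | nil => rfl
  | cons e u ih =>
    have hest : (e :: st).Pairwise (· ≤ ·) :=
      List.pairwise_cons.mpr ⟨hust e List.mem_cons_self, hst⟩
    have hpop : popPhase [[2, 1]] e st = (st, []) := by
      cases st with
      | nil => simp [popPhase]
      | cons f st =>
        have := not_containsPat_21_of_pairwise_le hest
        exact popPhase_cons_of_not_any (by simpa using this)
    have hge := (List.pairwise_cons.mp hu).1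
    rw [List.cons_append, stkAux, hpop, List.append_nil, ih hu.of_cons hest
      fun e' he' => List.forall_mem_cons.mpr
        ⟨hge e' he', fun f hf => (hge e' he').trans (hust e List.mem_cons_self f hf)⟩]
    simp

lemma stkAux_21_pairwise_le {v st out : List ℕ} (hv : v.Pairwise (· ≤ ·))
    (hst : st.Pairwise (· ≤ ·)) (hout : out.Pairwise (· ≤ ·))
    (hcross : ∀ o ∈ out, ∀ z ∈ st ++ v, o ≤ z) :
    (stkAux [[2, 1]] v st out).Pairwise (· ≤ ·) := by
  induction v generalizing st out with
  | nil =>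
    simpa [stkAux, List.pairwise_append] using ⟨hout, hst, by simpa using hcross⟩
  | cons b v ih =>
    obtain ⟨tk, dr, hpop, rfl, htk, hdr⟩ := exists_popPhase_21_eq (b := b) hst
    obtain ⟨htk_sorted, hdr_sorted, htk_dr⟩ := List.pairwise_append.mp hst
    rw [stkAux, hpop]
    apply ih hv.of_cons (List.pairwise_cons.mpr ⟨hdr, hdr_sorted⟩)
    · exact List.pairwise_append.mpr
        ⟨hout, htk_sorted, fun o ho t ht => hcross o ho t (by simp [ht])⟩
    · intro o ho z hz
      have hbv := (List.pairwise_cons.mp hv).1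
      simp only [List.mem_append, List.mem_cons] at ho hz hcross
      rcases ho with ho | ho
      · exact hcross o ho z (by tauto)
      · have hob := htk o ho
        rcases hz with (rfl | hz) | hz
        · exact hob.le
        · exact htk_dr o ho z hz
        · exact hob.le.trans (hbv z hz)

lemma westSort_pairwise_le_of_append {u v : List ℕ} (hu : u.Pairwise (· ≥ ·))
    (hv : v.Pairwise (· ≤ ·)) : (westSort (u ++ v)).Pairwise (· ≤ ·) := by
  rw [westSort, sT, stkAux_21_append_of_pairwise_ge v [] hu List.Pairwise.nil (by simp)]
  exact stkAux_21_pairwise_le hv (by simpa [List.pairwise_reverse] using hu) List.Pairwise.nil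
    (by simp)

lemma westSort_eq_idPerm {n : ℕ} {u v : List ℕ} (hperm : u ++ v ~ List.range' 1 n)
    (hu : u.Pairwise (· ≥ ·)) (hv : v.Pairwise (· ≤ ·)) :
    westSort (u ++ v) = idPerm n :=
  ((sT_perm _).trans hperm).eq_of_pairwise' (westSort_pairwise_le_of_append hu hv)
    (List.Pairwise.imp le_of_lt List.pairwise_lt_range')

lemma not_any_containsPat_132_321_of_pairwise_lt {b : ℕ} {s : List ℕ}
    (hs : s.Pairwise (· < ·)) :
    ¬ [[1, 3, 2], [3, 2, 1]].any fun p => containsPat p (b :: s) := by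
  rw [any_containsPat_132_321_iff]
  rintro ⟨c, d, e, hsub, hpat⟩
  have := List.pairwise_pair.mp (hs.sublist hsub.tail)
  omega

lemma popPhase_132_321_of_pairwise_lt {b : ℕ} {s : List ℕ} (hs : s.Pairwise (· < ·)) :
    popPhase [[1, 3, 2], [3, 2, 1]] b s = (s, []) := by
  cases s with
  | nil => simp [popPhase]
  | cons _ _ => exact popPhase_cons_of_not_any (not_any_containsPat_132_321_of_pairwise_lt hs)

lemma exists_of_any_containsPat_132_321 {a b : ℕ} {s : List ℕ} (hs : s.Pairwise (· < ·))
    (h : [[1, 3, 2], [3, 2, 1]].any fun p => containsPat p (b :: a :: s)) :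
    ∃ e ∈ s, b < e ∧ e < a ∨ e < a ∧ a < b := by
  obtain ⟨c, d, e, hsub, hpat⟩ := any_containsPat_132_321_iff.mp h
  have hde : ¬ [d, e] <+ s := fun hsub' => by
    have := List.pairwise_pair.mp (hs.sublist hsub')
    omega
  rcases List.sublist_cons_iff.mp hsub with hsub | ⟨r, hr, hsub⟩
  · exact absurd hsub.tail hde
  obtain ⟨rfl, rfl⟩ := List.cons_eq_cons.mp hr
  rcases List.sublist_cons_iff.mp hsub with hsub | ⟨r, hr, hsub⟩
  · exact absurd hsub hde
  obtain ⟨rfl, rfl⟩ := List.cons_eq_cons.mp hr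
  exact ⟨e, List.singleton_sublist.mp hsub, by omega⟩

lemma any_containsPat_132_of_mem {a b e : ℕ} {s : List ℕ} (he : e ∈ s) (hbe : b < e)
    (hea : e < a) : [[1, 3, 2], [3, 2, 1]].any fun p => containsPat p (b :: a :: s) :=
  any_containsPat_132_321_iff.mpr
    ⟨b, a, e, by simpa using List.singleton_sublist.mpr he, Or.inl ⟨hbe, hea⟩⟩

lemma has132Star_append {q rest : List ℕ} {b z : ℕ} (hz : z ∈ q) (hzb : z < b) :
    Has132Star (q ++ (b + 1) :: b :: rest) := by
  obtain ⟨i, hi, rfl⟩ := List.getElem_of_mem hz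
  refine ⟨i, q.length, hi, by simp, ?_, ?_⟩
  · simpa [List.getD_eq_getElem?_getD, List.getElem?_append_left hi, hi] using hzb
  · simp [List.getD_eq_getElem?_getD]

/-- The state of the `(132,321)`-stack after reading the prefix `q ++ [a]` of `x`: the stack is
`a :: s` (top first), `out` has been output, and `rest` is still to be read. -/
structure FirstPassInv (x q : List ℕ) (a : ℕ) (s out rest : List ℕ) : Prop where
  eq : x = q ++ a :: rest
  stack_pairwise : s.Pairwise (· < ·)
  out_pairwise : out.Pairwise (· > ·)
  top_lt_out : ∀ o ∈ out, a < o
  rest_lt_out : ∀ o ∈ out, ∀ r ∈ rest, r < o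
  stack_subset : ∀ z ∈ s, z ∈ q
  prefix_subset : ∀ y ∈ q, y ∈ out ∨ y ∈ s

namespace FirstPassInv

variable {x q s out rest : List ℕ} {a b : ℕ}

lemma pop (I : FirstPassInv x q a s out (b :: rest)) (hnd : x.Nodup)
    (h123 : ¬ containsPat [1, 2, 3] x)
    (hP : [[1, 3, 2], [3, 2, 1]].any fun p => containsPat p (b :: a :: s)) :
    popPhase [[1, 3, 2], [3, 2, 1]] b (a :: s) = (s, [a]) ∧
      FirstPassInv x (q ++ [a]) b s (out ++ [a]) rest := by
  obtain ⟨e, hes, hcases⟩ := exists_of_any_containsPat_132_321 I.stack_pairwise hP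
  have he : e ∈ q := I.stack_subset e hes
  obtain ⟨hbe, hea⟩ : b < e ∧ e < a := hcases.resolve_right fun ⟨hea, hab⟩ =>
    h123 (containsPat_123_iff.mpr
      ⟨e, a, b, I.eq ▸ List.cons_sublist_append_of_mem he (by simp), hea, hab⟩)
  have hra : ∀ r ∈ rest, r < a := by
    intro r hr
    have hne : r ≠ a := by
      rintro rfl
      simp [I.eq, List.nodup_append, hr] at hnd
    by_contra! har
    exact h123 (containsPat_123_iff.mpr ⟨e, a, r,
      I.eq ▸ List.cons_sublist_append_of_mem he (by simp [hr]), hea,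
      lt_of_le_of_ne har hne.symm⟩)
  refine ⟨by rw [popPhase_cons_of_any hP, popPhase_132_321_of_pairwise_lt I.stack_pairwise], ?_⟩
  refine ⟨by simp [I.eq], I.stack_pairwise, ?_, ?_, ?_, ?_, ?_⟩
  · exact List.pairwise_append.mpr ⟨I.out_pairwise, by simp, by simpa using I.top_lt_out⟩
  · simp only [List.mem_append, List.mem_singleton]
    rintro o (ho | rfl)
    exacts [I.rest_lt_out o ho b List.mem_cons_self, hbe.trans hea]
  · simp only [List.mem_append, List.mem_singleton]
    rintro o (ho | rfl) r hr
    exacts [I.rest_lt_out o ho r (List.mem_cons_of_mem b hr), hra r hr]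
  · exact fun z hz => List.mem_append_left _ (I.stack_subset z hz)
  · simp only [List.mem_append, List.mem_singleton]
    rintro y (hy | rfl)
    exacts [(I.prefix_subset y hy).imp_left Or.inl, Or.inl (Or.inr rfl)]

lemma push (I : FirstPassInv x q a s out (b :: rest))
    (hP : ¬ [[1, 3, 2], [3, 2, 1]].any fun p => containsPat p (b :: a :: s))
    (has : ∀ z ∈ s, a < z) :
    popPhase [[1, 3, 2], [3, 2, 1]] b (a :: s) = (a :: s, []) ∧
      FirstPassInv x (q ++ [a]) b (a :: s) out rest := by
  refine ⟨popPhase_cons_of_not_any hP, by simp [I.eq],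
    List.pairwise_cons.mpr ⟨has, I.stack_pairwise⟩, I.out_pairwise,
    fun o ho => I.rest_lt_out o ho b List.mem_cons_self,
    fun o ho r hr => I.rest_lt_out o ho r (List.mem_cons_of_mem b hr), ?_, ?_⟩
  · simp only [List.mem_cons, List.mem_append, List.not_mem_nil, or_false]
    rintro z (rfl | hz)
    exacts [Or.inr rfl, Or.inl (I.stack_subset z hz)]
  · simp only [List.mem_cons, List.mem_append, List.not_mem_nil, or_false]
    rintro y (hy | rfl)
    exacts [(I.prefix_subset y hy).imp_right Or.inr, Or.inr (Or.inl rfl)]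

/-- If some `z < a` lay below the top `a` and `b` is pushed without popping, then `z < b < a`
(otherwise `b a z` is a `132` or `z a b` a `123`), and `a = b + 1` gives a `132*`, while for
`b + 1 < a` the entry `b + 1` is either in the stack (so pushing `b` pops) or still to come
(so `z b (b + 1)` is a `123`). -/
lemma top_lt_of_mem_stack {n : ℕ} (I : FirstPassInv x q a s out (b :: rest))
    (hx : x ~ List.range' 1 n) (h123 : ¬ containsPat [1, 2, 3] x) (hstar : ¬ Has132Star x)
    (hP : ¬ [[1, 3, 2], [3, 2, 1]].any fun p => containsPat p (b :: a :: s)) :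
    ∀ z ∈ s, a < z := by
  intro z hz
  have hzq := I.stack_subset z hz
  have hnd : x.Nodup := hx.nodup_iff.mpr List.nodup_range'
  have hrange : ∀ y ∈ x, 1 ≤ y ∧ y < 1 + n := fun y hy =>
    List.mem_range'_1.mp (hx.subset hy)
  obtain rfl := I.eq
  have no123 : ∀ c d e, [c, d, e] <+ q ++ a :: b :: rest → c < d → d < e → False :=
    fun c d e hsub hcd hde => h123 (containsPat_123_iff.mpr ⟨c, d, e, hsub, hcd, hde⟩)
  have hdisj := List.disjoint_of_nodup_append hnd
  have hza : z ≠ a := by rintro rfl; exact hdisj hzq (by simp)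
  have hzb : z ≠ b := by rintro rfl; exact hdisj hzq (by simp)
  have hab : a ≠ b := by rintro rfl; simp [List.nodup_append] at hnd
  by_contra! haz
  replace haz := lt_of_le_of_ne haz hza
  rcases lt_or_gt_of_ne hzb with hzb | hbz
  swap
  · exact hP (any_containsPat_132_of_mem hz hbz haz)
  rcases lt_or_gt_of_ne hab with hab | hba
  · exact no123 z a b (List.cons_sublist_append_of_mem hzq (by simp)) haz hab
  obtain rfl | hb1a : a = b + 1 ∨ b + 1 < a := by omega
  · exact hstar (has132Star_append hzq hzb)
  have hb1 : b + 1 ∈ q ++ a :: b :: rest := by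
    refine hx.mem_iff.mpr (List.mem_range'_1.mpr ?_)
    have := hrange a (by simp)
    have := hrange b (by simp)
    omega
  simp only [List.mem_append, List.mem_cons] at hb1
  rcases hb1 with hq | rfl | h | hr
  · rcases I.prefix_subset _ hq with ho | hs
    · exact absurd (I.top_lt_out _ ho) (by omega)
    · exact hP (any_containsPat_132_of_mem hs (Nat.lt_add_one b) hb1a)
  · omega
  · omega
  · exact no123 z b (b + 1) (List.cons_sublist_append_of_mem hzq (by simp [hr])) hzb
      (Nat.lt_add_one b)

lemma exists_stkAux_eq_append {n : ℕ} (I : FirstPassInv x q a s out rest)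
    (hx : x ~ List.range' 1 n) (h123 : ¬ containsPat [1, 2, 3] x) (hstar : ¬ Has132Star x) :
    ∃ u v, stkAux [[1, 3, 2], [3, 2, 1]] rest (a :: s) out = u ++ v ∧
      u.Pairwise (· ≥ ·) ∧ v.Pairwise (· ≤ ·) := by
  induction rest generalizing q a s out with
  | nil =>
    refine ⟨out ++ [a], s, by simp [stkAux], ?_, I.stack_pairwise.imp le_of_lt⟩
    exact (List.pairwise_append.mpr ⟨I.out_pairwise, by simp, by simpa using I.top_lt_out⟩).imp
      le_of_lt
  | cons b rest ih =>
    rw [stkAux]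
    by_cases hP : [[1, 3, 2], [3, 2, 1]].any fun p => containsPat p (b :: a :: s)
    · obtain ⟨hpop, I'⟩ := I.pop (hx.nodup_iff.mpr List.nodup_range') h123 hP
      rw [hpop]
      exact ih I'
    · obtain ⟨hpop, I'⟩ := I.push hP (I.top_lt_of_mem_stack hx h123 hstar hP)
      rw [hpop, List.append_nil]
      exact ih I'

end FirstPassInv

/-- If a permutation avoids `123` and the bivincular pattern `132*`,
then it is sorted by the `(132,321)`-machine. -/
theorem avoids_implies_sortable (n : ℕ) (x : List ℕ) (hx : IsPermList n x)
    (h123 : containsPat [1,2,3] x = false) (hstar : ¬ Has132Star x) :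
    westSort (sT [[1,3,2],[3,2,1]] x) = idPerm n := by
  cases x with
  | nil =>
    obtain rfl : n = 0 := by simpa using hx.length_eq.symm
    rfl
  | cons a rest =>
    have I : FirstPassInv (a :: rest) [] a [] [] rest :=
      ⟨rfl, .nil, .nil, by simp, by simp, by simp, by simp⟩
    obtain ⟨u, v, huv, hu, hv⟩ := I.exists_stkAux_eq_append hx (by simp [h123]) hstar
    have hsT : sT [[1, 3, 2], [3, 2, 1]] (a :: rest) = u ++ v := huv
    rw [hsT]
    exact westSort_eq_idPerm (hsT ▸ (sT_perm _).trans hx) hu hv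
end

section
/- Let g_n = |Av_n(132, 123*)| and f_n be the number of permutations x ∈ Av_n(132) such that ind_x(n) - 1 = ind_x(n-1) > 1 and the permutation obtained by deleting n from x avoids 123*. Then for all n ≥ 2, f_n = g_{n-1} - g_{n-2}. -/
/-- `g n = |Av_n(132, 123*)|`. -/
def gCount (n : ℕ) : ℕ :=
  ((List.range' 1 n).permutations.filter fun x =>
    !containsPat [1,3,2] x && !has123star x).length

/-- `f n` : the number of `x ∈ Av_n(132)` with `ind_x(n) - 1 = ind_x(n-1) > 1` (1-based)
whose deletion of `n` avoids `123*`. -/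
def fCount (n : ℕ) : ℕ :=
  ((List.range' 1 n).permutations.filter fun x =>
    !containsPat [1,3,2] x && (x.idxOf n == x.idxOf (n-1) + 1) &&
      decide (1 ≤ x.idxOf (n-1)) && !has123star (x.erase n)).length

/-!
Split `Av_{k+1}(132, 123*)` by the position of its maximum `k+1`. When `k+1` comes first,
deleting it is a bijection onto `Av_k(132, 123*)`: a leading maximum takes part in no `132`
and in no `123*`. Otherwise the permutation is `u (k+1) v` with `u` nonempty, and inserting
`k+2` right after `k+1` is a bijection onto the permutations counted by `f_{k+2}`: a `132`
whose `3` is `k+2` has its `1` in `u` and its `2` in `v`, so `k+1` can serve as the `3`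
instead. Hence `g_{k+1} = f_{k+2} + g_k`.
-/

namespace List

variable {α : Type*}

lemma insertIdx_append_cons {u v : List α} {a b : α} :
    (u ++ a :: v).insertIdx (u.length + 1) b = u ++ a :: b :: v := by
  induction u with
  | nil => rfl
  | cons c u ih => simp [insertIdx_succ_cons, ih]

variable [BEq α] [LawfulBEq α]

def insertAfter (a b : α) (l : List α) : List α := l.insertIdx (l.idxOf a + 1) b

lemma idxOf_append_cons_of_notMem {u v : List α} {a : α} (h : a ∉ u) :
    (u ++ a :: v).idxOf a = u.length := by
  rw [idxOf_append_of_notMem h, idxOf_cons_self, Nat.add_zero]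

lemma exists_eq_append_cons_cons_of_idxOf_eq_succ {l : List α} {a b : α} (hb : b ∈ l)
    (h : l.idxOf b = l.idxOf a + 1) : ∃ u v, l = u ++ a :: b :: v := by
  induction l with
  | nil => simp at hb
  | cons c l ih =>
    by_cases hca : c = a
    · subst hca
      have hcb : c ≠ b := by rintro rfl; simp at h
      rw [idxOf_cons_self, idxOf_cons_ne _ hcb] at h
      cases l with
      | nil => simp [hcb.symm] at hb
      | cons d v =>
        obtain rfl : d = b := by_contra fun hdb => by simp [idxOf_cons_ne _ hdb] at h
        exact ⟨[], v, rfl⟩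
    · have hcb : c ≠ b := by rintro rfl; simp at h
      rw [idxOf_cons_ne _ hca, idxOf_cons_ne _ hcb, Nat.succ_inj] at h
      obtain ⟨u, v, rfl⟩ := ih ((mem_cons.1 hb).resolve_left (Ne.symm hcb)) h
      exact ⟨c :: u, v, rfl⟩

lemma insertAfter_append_cons {u v : List α} {a b : α} (h : a ∉ u) :
    insertAfter a b (u ++ a :: v) = u ++ a :: b :: v := by
  rw [insertAfter, idxOf_append_cons_of_notMem h, insertIdx_append_cons]

lemma erase_append_cons_cons {u v : List α} {a b : α} (hu : b ∉ u) (hab : a ≠ b) :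
    (u ++ a :: b :: v).erase b = u ++ a :: v := by
  rw [erase_append_right _ hu, erase_cons_tail (by simpa using hab), erase_cons_head]

end List

open List

lemma range'_one_succ_perm (n : ℕ) : (range' 1 (n + 1)).Perm ((n + 1) :: range' 1 n) := by
  rw [range'_concat, Nat.one_mul, Nat.add_comm 1 n]
  exact perm_append_singleton _ _

lemma append_cons_perm_range'_succ_iff {u v : List ℕ} {n : ℕ} :
    (u ++ (n + 1) :: v).Perm (range' 1 (n + 1)) ↔ (u ++ v).Perm (range' 1 n) := by
  constructor
  · intro h
    exact (perm_cons _).1 (perm_middle.symm.trans (h.trans (range'_one_succ_perm n)))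
  · intro h
    exact perm_middle.trans (((perm_cons _).2 h).trans (range'_one_succ_perm n).symm)

lemma lt_succ_of_perm_range' {l : List ℕ} {n a : ℕ} (h : l.Perm (range' 1 n)) (ha : a ∈ l) :
    a < n + 1 :=
  (mem_range'_1.1 (h.subset ha)).2.trans_eq (Nat.add_comm 1 n)

lemma mem_of_perm_range' {l : List ℕ} {n a : ℕ} (h : l.Perm (range' 1 n)) (ha1 : 1 ≤ a)
    (han : a ≤ n) : a ∈ l :=
  h.symm.subset (mem_range'_1.2 ⟨ha1, by omega⟩)

lemma exists_eq_append_cons_of_perm_range'_succ {l : List ℕ} {n : ℕ}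
    (h : l.Perm (range' 1 (n + 1))) :
    ∃ u v, l = u ++ (n + 1) :: v ∧ (u ++ v).Perm (range' 1 n) := by
  obtain ⟨u, v, rfl⟩ := append_of_mem (mem_of_perm_range' h (by omega) le_rfl)
  exact ⟨u, v, rfl, append_cons_perm_range'_succ_iff.1 h⟩

lemma forall_lt_of_append_cons_perm_range'_succ {u v : List ℕ} {n : ℕ}
    (h : (u ++ (n + 1) :: v).Perm (range' 1 (n + 1))) :
    (∀ a ∈ u, a < n + 1) ∧ ∀ a ∈ v, a < n + 1 :=
  have huv := append_cons_perm_range'_succ_iff.1 h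
  ⟨fun _ ha => lt_succ_of_perm_range' huv (mem_append_left v ha),
    fun _ ha => lt_succ_of_perm_range' huv (mem_append_right u ha)⟩

lemma idxOf_append_cons_of_perm_range'_succ {u v : List ℕ} {n : ℕ}
    (h : (u ++ (n + 1) :: v).Perm (range' 1 (n + 1))) :
    (u ++ (n + 1) :: v).idxOf (n + 1) = u.length :=
  idxOf_append_cons_of_notMem fun hu => ((forall_lt_of_append_cons_perm_range'_succ h).1 _ hu).false

lemma erase_append_cons_cons_of_perm_range'_succ {u v : List ℕ} {n : ℕ}
    (h : (u ++ (n + 1) :: v).Perm (range' 1 (n + 1))) :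
    (u ++ (n + 1) :: (n + 2) :: v).erase (n + 2) = u ++ (n + 1) :: v :=
  erase_append_cons_cons
    (fun hu => absurd ((forall_lt_of_append_cons_perm_range'_succ h).1 _ hu) (by omega)) (by omega)

lemma append_cons_succ_cons_perm_range'_iff {u v : List ℕ} {n : ℕ} :
    (u ++ n :: (n + 1) :: v).Perm (range' 1 (n + 1)) ↔ (u ++ n :: v).Perm (range' 1 n) := by
  simpa using append_cons_perm_range'_succ_iff (u := u ++ [n]) (v := v) (n := n)

lemma isoOrd_132_iff (a b c : ℕ) : isoOrd [1,3,2] [a,b,c] = true ↔ a < c ∧ c < b := by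
  simp [isoOrd, range_succ]
  omega

lemma containsPat_132_iff (w : List ℕ) :
    containsPat [1,3,2] w = true ↔ ∃ a b c, [a,b,c] <+ w ∧ a < c ∧ c < b := by
  simp only [containsPat, any_eq_true, mem_sublistsLen]
  constructor
  · rintro ⟨t, ⟨hs, hl⟩, hi⟩
    rcases t with _ | ⟨a, _ | ⟨b, _ | ⟨c, _ | ⟨d, t⟩⟩⟩⟩ <;> simp_all
    exact ⟨a, b, c, hs, (isoOrd_132_iff a b c).1 hi⟩
  · rintro ⟨a, b, c, hs, hac, hcb⟩
    exact ⟨[a,b,c], ⟨hs, rfl⟩, (isoOrd_132_iff a b c).2 ⟨hac, hcb⟩⟩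

lemma containsPat_132_append_cons_of_forall_lt {u v : List ℕ} {t : ℕ}
    (hu : ∀ a ∈ u, a < t) (hv : ∀ c ∈ v, c < t) :
    containsPat [1,3,2] (u ++ t :: v) = true ↔
      containsPat [1,3,2] u = true ∨ containsPat [1,3,2] v = true ∨
        ∃ a ∈ u, ∃ c ∈ v, a < c := by
  simp only [containsPat_132_iff]
  constructor
  · rintro ⟨a, b, c, hs, hac, hcb⟩
    obtain ⟨l₁, l₂, hl, h₁, h₂⟩ := sublist_append_iff.1 hs
    rcases sublist_cons_iff.1 h₂ with h₂ | ⟨r, rfl, hr⟩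
    · rcases l₁ with _ | ⟨a', _ | ⟨b', _ | ⟨c', _ | ⟨d', l₁⟩⟩⟩⟩ <;>
        simp only [nil_append, cons_append, cons.injEq] at hl
      · exact Or.inr (Or.inl ⟨a, b, c, hl ▸ h₂, hac, hcb⟩)
      · obtain ⟨rfl, rfl⟩ := hl
        exact Or.inr (Or.inr ⟨a, h₁.subset (by simp), c, h₂.subset (by simp), hac⟩)
      · obtain ⟨rfl, rfl, rfl⟩ := hl
        exact Or.inr (Or.inr ⟨a, h₁.subset (by simp), c, h₂.subset (by simp), hac⟩)
      · obtain ⟨rfl, rfl, rfl, -⟩ := hl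
        exact Or.inl ⟨a, b, c, h₁, hac, hcb⟩
      · exact absurd hl.2.2.2 (by simp)
    · rcases l₁ with _ | ⟨a', _ | ⟨b', _ | ⟨c', l₁⟩⟩⟩ <;>
        simp only [nil_append, cons_append, cons.injEq] at hl
      · obtain ⟨rfl, rfl⟩ := hl
        exact absurd (hv c (hr.subset (by simp))) (by omega)
      · obtain ⟨rfl, rfl, rfl⟩ := hl
        exact Or.inr (Or.inr ⟨a, h₁.subset (by simp), c, hr.subset (by simp), hac⟩)
      · obtain ⟨rfl, rfl, rfl, -⟩ := hl
        exact absurd (hu b (h₁.subset (by simp))) (by omega)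
      · exact absurd hl.2.2 (by simp)
  · rintro (⟨a, b, c, hs, hac, hcb⟩ | ⟨a, b, c, hs, hac, hcb⟩ | ⟨a, ha, c, hc, hac⟩)
    · exact ⟨a, b, c, hs.trans (sublist_append_left u _), hac, hcb⟩
    · exact ⟨a, b, c, hs.trans ((sublist_cons_self t v).trans (sublist_append_right u _)),
        hac, hcb⟩
    · exact ⟨a, t, c, (singleton_sublist.2 ha).append ((singleton_sublist.2 hc).cons_cons t),
        hac, hv c hc⟩

lemma containsPat_132_cons_of_forall_lt {z : List ℕ} {m : ℕ} (hz : ∀ a ∈ z, a < m) :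
    containsPat [1,3,2] (m :: z) = containsPat [1,3,2] z := by
  have h := containsPat_132_append_cons_of_forall_lt (u := []) (by simp) hz
  simp only [nil_append, not_mem_nil, false_and, exists_false, or_false] at h
  rw [Bool.eq_iff_iff, h]
  simp [containsPat]

lemma containsPat_132_append_cons_succ_cons {u v : List ℕ} {m : ℕ}
    (hu : ∀ a ∈ u, a < m) (hv : ∀ c ∈ v, c < m) :
    containsPat [1,3,2] (u ++ m :: (m + 1) :: v) = containsPat [1,3,2] (u ++ m :: v) := by
  have hum : ∀ a ∈ u ++ [m], a < m + 1 := by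
    intro a ha
    rcases mem_append.1 ha with ha | ha
    · exact (hu a ha).trans (by omega)
    · rw [mem_singleton.1 ha]; omega
  rw [Bool.eq_iff_iff, show u ++ m :: (m + 1) :: v = (u ++ [m]) ++ (m + 1) :: v by simp,
    containsPat_132_append_cons_of_forall_lt hum (fun c hc => (hv c hc).trans (by omega)),
    containsPat_132_append_cons_of_forall_lt hu hv,
    containsPat_132_append_cons_of_forall_lt hu (by simp)]
  have hnil : containsPat [1,3,2] [] = false := rfl
  have hm : ¬ ∃ c ∈ v, m < c := fun ⟨c, hc, hmc⟩ => absurd (hv c hc) (by omega)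
  simp only [hnil, Bool.false_eq_true, not_mem_nil, false_and, exists_false, or_false,
    mem_append, mem_singleton, or_and_right, exists_or, exists_eq_left, hm,
    and_false]

lemma has123star_iff (x : List ℕ) : has123star x = true ↔ Has123Star x := by
  simp only [has123star, Has123Star, any_eq_true, mem_range, Bool.and_eq_true, beq_iff_eq,
    decide_eq_true_eq]
  constructor
  · rintro ⟨j, -, ⟨hj, hstep⟩, i, hij, hlt⟩
    exact ⟨i, j, hij, hj, hlt, hstep⟩
  · rintro ⟨i, j, hij, hj, hlt, hstep⟩
    exact ⟨j, by omega, ⟨hj, hstep⟩, i, hij, hlt⟩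

lemma has123star_cons_of_forall_lt {z : List ℕ} {m : ℕ} (hz : ∀ a ∈ z, a < m) :
    has123star (m :: z) = has123star z := by
  rw [Bool.eq_iff_iff, has123star_iff, has123star_iff]
  constructor
  · rintro ⟨i, j, hij, hj, hlt, hstep⟩
    obtain ⟨j, rfl⟩ : ∃ j', j = j' + 1 := ⟨j - 1, by omega⟩
    rw [length_cons] at hj
    rw [getD_cons_succ] at hlt hstep
    rcases i with _ | i
    · rw [getD_cons_zero, getD_eq_getElem z 0 (show j < z.length by omega)] at hlt
      exact absurd (hz z[j] (getElem_mem _)) (by omega)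
    · rw [getD_cons_succ] at hlt
      exact ⟨i, j, by omega, by omega, hlt, hstep⟩
  · rintro ⟨i, j, hij, hj, hlt, hstep⟩
    exact ⟨i + 1, j + 1, by omega, by simpa using hj, hlt, hstep⟩

def permFinset (n : ℕ) : Finset (List ℕ) := (range' 1 n).permutations.toFinset

lemma mem_permFinset {n : ℕ} {x : List ℕ} : x ∈ permFinset n ↔ x.Perm (range' 1 n) := by
  simp [permFinset, mem_permutations]

lemma length_filter_permutations_range' (n : ℕ) (p : List ℕ → Bool) :
    ((range' 1 n).permutations.filter p).length = ((permFinset n).filter (p ·)).card := by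
  rw [permFinset, ← toFinset_filter,
    toFinset_card_of_nodup ((nodup_permutations _ nodup_range').filter p)]

def avoiders (n : ℕ) : Finset (List ℕ) :=
  (permFinset n).filter fun x => !containsPat [1,3,2] x && !has123star x

def fSet (n : ℕ) : Finset (List ℕ) :=
  (permFinset n).filter fun x => !containsPat [1,3,2] x && (x.idxOf n == x.idxOf (n-1) + 1) &&
    decide (1 ≤ x.idxOf (n-1)) && !has123star (x.erase n)

lemma gCount_eq_card_avoiders (n : ℕ) : gCount n = (avoiders n).card :=
  length_filter_permutations_range' n _

lemma fCount_eq_card_fSet (n : ℕ) : fCount n = (fSet n).card :=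
  length_filter_permutations_range' n _

lemma mem_avoiders {n : ℕ} {x : List ℕ} :
    x ∈ avoiders n ↔
      x.Perm (range' 1 n) ∧ containsPat [1,3,2] x = false ∧ has123star x = false := by
  simp [avoiders, mem_permFinset]

lemma filter_avoiders_succ_idxOf_lt_one (k : ℕ) :
    (avoiders (k + 1)).filter (fun y => ¬ 1 ≤ y.idxOf (k + 1)) =
      (avoiders k).map ⟨cons (k + 1), cons_injective⟩ := by
  ext y
  simp only [Finset.mem_filter, Finset.mem_map, Function.Embedding.coeFn_mk, mem_avoiders]
  constructor
  · rintro ⟨⟨hy, h132, hstar⟩, hidx⟩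
    obtain ⟨u, v, rfl, huv⟩ := exists_eq_append_cons_of_perm_range'_succ hy
    rw [idxOf_append_cons_of_perm_range'_succ hy] at hidx
    obtain rfl : u = [] := eq_nil_of_length_eq_zero (by omega)
    have hv := (forall_lt_of_append_cons_perm_range'_succ hy).2
    rw [nil_append, containsPat_132_cons_of_forall_lt hv] at h132
    rw [nil_append, has123star_cons_of_forall_lt hv] at hstar
    exact ⟨v, ⟨huv, h132, hstar⟩, rfl⟩
  · rintro ⟨z, ⟨hz, h132, hstar⟩, rfl⟩
    have hlt : ∀ a ∈ z, a < k + 1 := fun _ => lt_succ_of_perm_range' hz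
    rw [containsPat_132_cons_of_forall_lt hlt, has123star_cons_of_forall_lt hlt]
    exact ⟨⟨append_cons_perm_range'_succ_iff (u := []).2 hz, h132, hstar⟩, by simp⟩

lemma append_cons_succ_cons_mem_fSet_iff {k : ℕ} {u v : List ℕ}
    (hy : (u ++ (k + 1) :: v).Perm (range' 1 (k + 1))) :
    u ++ (k + 1) :: (k + 2) :: v ∈ fSet (k + 2) ↔
      u ≠ [] ∧ u ++ (k + 1) :: v ∈ avoiders (k + 1) := by
  obtain ⟨hu, hv⟩ := forall_lt_of_append_cons_perm_range'_succ hy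
  have hu1 : k + 1 ∉ u := fun h => (hu _ h).false
  have hu2 : k + 2 ∉ u := fun h => absurd (hu _ h) (by omega)
  have hidx : (u ++ (k + 1) :: (k + 2) :: v).idxOf (k + 2) = u.length + 1 := by
    rw [idxOf_append_of_notMem hu2, idxOf_cons_ne _ (by omega), idxOf_cons_self]
  simp only [fSet, Finset.mem_filter, mem_permFinset, mem_avoiders,
    show k + 2 - 1 = k + 1 from rfl, append_cons_succ_cons_perm_range'_iff,
    containsPat_132_append_cons_succ_cons hu hv, idxOf_append_cons_of_notMem hu1, hidx,
    erase_append_cons_cons_of_perm_range'_succ hy, Bool.and_eq_true, Bool.not_eq_true',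
    beq_self_eq_true, and_true, decide_eq_true_eq, Nat.one_le_iff_ne_zero, ne_eq, length_eq_zero_iff]
  tauto

lemma mem_fSet_add_two {k : ℕ} {x : List ℕ} :
    x ∈ fSet (k + 2) ↔
      ∃ u v, x = u ++ (k + 1) :: (k + 2) :: v ∧ u ≠ [] ∧
        u ++ (k + 1) :: v ∈ avoiders (k + 1) := by
  constructor
  · intro hx
    obtain ⟨hperm, hidx⟩ :
        x.Perm (range' 1 (k + 2)) ∧ x.idxOf (k + 2) = x.idxOf (k + 1) + 1 := by
      simp only [fSet, Finset.mem_filter, mem_permFinset, Bool.and_eq_true, beq_iff_eq] at hx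
      exact ⟨hx.1, hx.2.1.1.2⟩
    obtain ⟨u, v, rfl⟩ := exists_eq_append_cons_cons_of_idxOf_eq_succ
      (mem_of_perm_range' hperm (by omega) le_rfl) hidx
    exact ⟨u, v, rfl,
      (append_cons_succ_cons_mem_fSet_iff (append_cons_succ_cons_perm_range'_iff.1 hperm)).1 hx⟩
  · rintro ⟨u, v, rfl, h⟩
    exact (append_cons_succ_cons_mem_fSet_iff (mem_avoiders.1 h.2).1).2 h

lemma mem_filter_avoiders_succ_one_le_idxOf {k : ℕ} {y : List ℕ} :
    y ∈ (avoiders (k + 1)).filter (fun y => 1 ≤ y.idxOf (k + 1)) ↔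
      ∃ u v, y = u ++ (k + 1) :: v ∧ u ≠ [] ∧ y ∈ avoiders (k + 1) := by
  rw [Finset.mem_filter]
  constructor
  · rintro ⟨hy, hpos⟩
    obtain ⟨u, v, rfl, -⟩ := exists_eq_append_cons_of_perm_range'_succ (mem_avoiders.1 hy).1
    rw [idxOf_append_cons_of_perm_range'_succ (mem_avoiders.1 hy).1] at hpos
    exact ⟨u, v, rfl, ne_nil_of_length_pos hpos, hy⟩
  · rintro ⟨u, v, rfl, hne, hy⟩
    rw [idxOf_append_cons_of_perm_range'_succ (mem_avoiders.1 hy).1]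
    exact ⟨hy, length_pos_of_ne_nil hne⟩

lemma card_fSet_add_two (k : ℕ) :
    (fSet (k + 2)).card = ((avoiders (k + 1)).filter (fun y => 1 ≤ y.idxOf (k + 1))).card := by
  have erase_eq {u v : List ℕ} (hy : u ++ (k + 1) :: v ∈ avoiders (k + 1)) :
      (u ++ (k + 1) :: (k + 2) :: v).erase (k + 2) = u ++ (k + 1) :: v :=
    erase_append_cons_cons_of_perm_range'_succ (mem_avoiders.1 hy).1
  have insert_eq {u v : List ℕ} (hy : u ++ (k + 1) :: v ∈ avoiders (k + 1)) :
      insertAfter (k + 1) (k + 2) (u ++ (k + 1) :: v) = u ++ (k + 1) :: (k + 2) :: v :=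
    insertAfter_append_cons (fun h => ((forall_lt_of_append_cons_perm_range'_succ
      (mem_avoiders.1 hy).1).1 _ h).false)
  refine Finset.card_nbij' (·.erase (k + 2)) (insertAfter (k + 1) (k + 2)) ?_ ?_ ?_ ?_
  · intro x hx
    obtain ⟨u, v, rfl, hne, hy⟩ := mem_fSet_add_two.1 hx
    simp only [Finset.mem_coe, erase_eq hy]
    exact mem_filter_avoiders_succ_one_le_idxOf.2 ⟨u, v, rfl, hne, hy⟩
  · intro y hy
    obtain ⟨u, v, rfl, hne, hy⟩ := mem_filter_avoiders_succ_one_le_idxOf.1 hy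
    simp only [Finset.mem_coe, insert_eq hy]
    exact mem_fSet_add_two.2 ⟨u, v, rfl, hne, hy⟩
  · intro x hx
    obtain ⟨u, v, rfl, -, hy⟩ := mem_fSet_add_two.1 hx
    simp only [erase_eq hy, insert_eq hy]
  · intro y hy
    obtain ⟨u, v, rfl, -, hy⟩ := mem_filter_avoiders_succ_one_le_idxOf.1 hy
    simp only [insert_eq hy, erase_eq hy]

lemma gCount_succ (k : ℕ) : gCount (k + 1) = fCount (k + 2) + gCount k := by
  rw [gCount_eq_card_avoiders, gCount_eq_card_avoiders, fCount_eq_card_fSet, card_fSet_add_two,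
    ← Finset.card_filter_add_card_filter_not (s := avoiders (k + 1)) (1 ≤ ·.idxOf (k + 1)),
    filter_avoiders_succ_idxOf_lt_one, Finset.card_map]

/-- For `n ≥ 2`, `f n = g (n-1) - g (n-2)`. -/
theorem f_eq_g_sub (n : ℕ) (hn : 2 ≤ n) :
    (fCount n : ℤ) = gCount (n-1) - gCount (n-2) := by
  obtain ⟨k, rfl⟩ : ∃ k, n = k + 2 := ⟨n - 2, by omega⟩
  rw [show k + 2 - 1 = k + 1 from rfl, show k + 2 - 2 = k from rfl, gCount_succ]
  push_cast
  ring
end
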